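/- arXiv:2012.02392 — 3 statements merged into one kernel-verified Lean document; each statement's English description precedes it below -/
import Mathlib

section
/- For a Poisson random variable X with mean μ > 0 and positive integers k ≤ q, the derivative with respect to μ of E[X_q(X_q-1)···(X_q-k+1)] equals k·μ^{k-1}·P(X ≤ q-k), where X_q = min(X, q). -/
/-!
Since `d/dμ p_μ(n) = p_μ(n-1) - p_μ(n)`, the Poisson distribution function satisfies
`d/dμ P(X ≤ n) = -p_μ(n)`. Writing `E g(X) = g 0 + ∑ₙ (g(n+1) - g n) P(X > n)` for an eventually
constant `g` then gives `d/dμ E g(X) = E (g(X+1) - g X)`. For `g n = (min n q)^(k)` the increment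
is `k n^(k-1)` below `q` and `0` from `q` on, and `p_μ(n) n^(k-1) = μ^(k-1) p_μ(n-k+1)` turns
`E[k X^(k-1); X < q]` into `k μ^(k-1) P(X ≤ q - k)`.
-/

open scoped BigOperators

/-- The Poisson probability mass function with real mean parameter `μ`. -/
noncomputable def poissonPMF (μ : ℝ) (n : ℕ) : ℝ := Real.exp (-μ) * μ ^ n / n.factorial

open Finset

theorem Nat.succ_descFactorial_succ_eq_add (n k : ℕ) :
    (n + 1).descFactorial (k + 1) = n.descFactorial (k + 1) + (k + 1) * n.descFactorial k := by
  rw [succ_descFactorial_succ, descFactorial_succ, ← add_mul]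
  rcases le_or_gt k n with h | h
  · congr 1; omega
  · simp [descFactorial_eq_zero_iff_lt.mpr h]

theorem sum_range_mul_add_eq_add_sum_tail (p g : ℕ → ℝ) (N : ℕ) :
    ∑ n ∈ range N, p n * g n + g N * (1 - ∑ n ∈ range N, p n)
      = g 0 + ∑ n ∈ range N, (g (n + 1) - g n) * (1 - ∑ j ∈ range (n + 1), p j) := by
  induction N with
  | zero => simp
  | succ N ih =>
    rw [sum_range_succ, sum_range_succ (fun n => (g (n + 1) - g n) * _), sum_range_succ p N]
    linear_combination ih

theorem tsum_mul_eq_add_sum_tail {p g : ℕ → ℝ} (hp : HasSum p 1) {N : ℕ}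
    (hg : ∀ n ≥ N, g n = g N) :
    ∑' n, p n * g n = g 0 + ∑ n ∈ range N, (g (n + 1) - g n) * (1 - ∑ j ∈ range (n + 1), p j) := by
  have hfin : ∀ n ∉ range N, p n * (g n - g N) = 0 := fun n hn => by
    rw [hg n (by simpa using hn), sub_self, mul_zero]
  have h := (hasSum_sum_of_ne_finset_zero hfin).add (hp.mul_right (g N))
  simp only [← mul_add, sub_add_cancel, one_mul] at h
  rw [h.tsum_eq, ← sum_range_mul_add_eq_add_sum_tail]
  simp only [mul_sub, sum_sub_distrib, ← sum_mul]
  ring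

theorem hasSum_poissonPMF (m : ℝ) : HasSum (poissonPMF m) 1 := by
  have h := (NormedSpace.expSeries_div_hasSum_exp m).mul_left (Real.exp (-m))
  rw [← Real.exp_eq_exp_ℝ, ← Real.exp_add, neg_add_cancel, Real.exp_zero] at h
  show HasSum (fun n => poissonPMF m n) 1
  simpa only [poissonPMF, mul_div_assoc] using h

theorem poissonPMF_add_mul_descFactorial (m : ℝ) (k j : ℕ) :
    poissonPMF m (k + j) * ((k + j).descFactorial k : ℝ) = m ^ k * poissonPMF m j := by
  have hfac : (j.factorial : ℝ) * ((k + j).descFactorial k : ℝ) = ((k + j).factorial : ℝ) := by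
    have := Nat.factorial_mul_descFactorial (n := k + j) (k := k) (Nat.le_add_right k j)
    rw [Nat.add_sub_cancel_left] at this
    exact_mod_cast this
  unfold poissonPMF
  rw [← hfac, pow_add]
  have := j.factorial_ne_zero
  have : (k + j).descFactorial k ≠ 0 := (Nat.descFactorial_pos.2 (Nat.le_add_right k j)).ne'
  field_simp

theorem sum_range_poissonPMF_mul_descFactorial (m : ℝ) (q k : ℕ) :
    ∑ n ∈ range q, poissonPMF m n * (n.descFactorial k : ℝ)
      = m ^ k * ∑ j ∈ range (q - k), poissonPMF m j := by
  have hsub : Ico k q ⊆ range q := by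
    rw [range_eq_Ico]; exact Ico_subset_Ico_left (Nat.zero_le k)
  have hlow : ∀ n ∈ range q, n ∉ Ico k q → poissonPMF m n * (n.descFactorial k : ℝ) = 0 :=
    fun n hn hn' => by
      rw [Nat.descFactorial_eq_zero_iff_lt.2 (by simp_all), Nat.cast_zero, mul_zero]
  rw [← sum_subset hsub hlow, sum_Ico_eq_sum_range, mul_sum]
  exact sum_congr rfl fun j _ => poissonPMF_add_mul_descFactorial m k j

theorem hasDerivAt_poissonPMF_zero (μ : ℝ) :
    HasDerivAt (fun m => poissonPMF m 0) (-poissonPMF μ 0) μ := by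
  simpa [poissonPMF] using (hasDerivAt_neg μ).exp

theorem hasDerivAt_poissonPMF_succ (μ : ℝ) (n : ℕ) :
    HasDerivAt (fun m => poissonPMF m (n + 1)) (poissonPMF μ n - poissonPMF μ (n + 1)) μ := by
  have h : HasDerivAt (fun m => poissonPMF m (n + 1)) _ μ :=
    (((hasDerivAt_neg μ).exp).mul (hasDerivAt_pow (n + 1) μ)).div_const ((n + 1).factorial : ℝ)
  refine h.congr_deriv ?_
  unfold poissonPMF
  rw [Nat.factorial_succ]
  have := n.factorial_ne_zero
  push_cast
  field_simp
  ring

theorem hasDerivAt_sum_range_succ_poissonPMF (μ : ℝ) (n : ℕ) :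
    HasDerivAt (fun m => ∑ j ∈ range (n + 1), poissonPMF m j) (-poissonPMF μ n) μ := by
  induction n with
  | zero => simpa using hasDerivAt_poissonPMF_zero μ
  | succ n ih =>
    simp only [sum_range_succ _ (n + 1)]
    exact (ih.fun_add (hasDerivAt_poissonPMF_succ μ n)).congr_deriv (by ring)

theorem hasDerivAt_tsum_poissonPMF_mul {g : ℕ → ℝ} {N : ℕ} (hg : ∀ n ≥ N, g n = g N) (μ : ℝ) :
    HasDerivAt (fun m => ∑' n, poissonPMF m n * g n)
      (∑ n ∈ range N, poissonPMF μ n * (g (n + 1) - g n)) μ := by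
  simp only [tsum_mul_eq_add_sum_tail (hasSum_poissonPMF _) hg]
  refine (HasDerivAt.fun_sum fun n _ =>
    ((hasDerivAt_sum_range_succ_poissonPMF μ n).const_sub 1).const_mul (g (n + 1) - g n))
    |>.const_add (g 0) |>.congr_deriv ?_
  exact sum_congr rfl fun n _ => by ring

theorem stmt1_general (μ : ℝ) (q k : ℕ) (hk : 1 ≤ k) (hkq : k ≤ q) :
    HasDerivAt (fun m : ℝ => ∑' n : ℕ, poissonPMF m n * ((min n q).descFactorial k : ℝ))
      ((k : ℝ) * μ ^ (k - 1) * ∑ n ∈ Finset.range (q - k + 1), poissonPMF μ n) μ := by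
  obtain ⟨K, rfl⟩ : ∃ K, k = K + 1 := ⟨k - 1, by omega⟩
  have hconst : ∀ n ≥ q, ((min n q).descFactorial (K + 1) : ℝ) = (min q q).descFactorial (K + 1) :=
    fun n hn => by rw [min_eq_right hn, min_self]
  refine (hasDerivAt_tsum_poissonPMF_mul hconst μ).congr_deriv ?_
  calc ∑ n ∈ range q, poissonPMF μ n *
        (((min (n + 1) q).descFactorial (K + 1) : ℝ) - (min n q).descFactorial (K + 1))
      = ∑ n ∈ range q, (K + 1) * (poissonPMF μ n * n.descFactorial K) := by
        refine sum_congr rfl fun n hn => ?_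
        rw [mem_range] at hn
        rw [min_eq_left hn, min_eq_left hn.le, Nat.succ_descFactorial_succ_eq_add]
        push_cast
        ring
    _ = _ := by
        rw [← mul_sum, sum_range_poissonPMF_mul_descFactorial, Nat.add_sub_cancel,
          show q - (K + 1) + 1 = q - K by omega]
        push_cast
        ring

/-- For `X ~ Poisson(μ)` with `μ > 0` and positive integers `k ≤ q`, the derivative in `μ`
of the `k`-th falling factorial moment of `X_q = min(X, q)` equals
`k ⬝ μ^(k-1) ⬝ P(X ≤ q - k)`. -/
theorem stmt1 (μ : ℝ) (hμ : 0 < μ) (q k : ℕ) (hk : 1 ≤ k) (hkq : k ≤ q) :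
    HasDerivAt (fun m : ℝ => ∑' n : ℕ, poissonPMF m n * ((min n q).descFactorial k : ℝ))
      ((k : ℝ) * μ ^ (k - 1) * ∑ n ∈ Finset.range (q - k + 1), poissonPMF μ n) μ :=
  stmt1_general μ q k hk hkq
end

section
/- For a Poisson random variable X with mean μ > 0 and a nonempty finite set A of nonnegative integers with P(X ∈ A) > 0, the derivative with respect to μ of the conditional expectation E[X | X ∈ A] equals (1/μ)·Var[X | X ∈ A], which is nonnegative, with equality to zero if and only if A is a singleton. -/
/-!
Since `∂ₘ p_n(m) = p_n(m) (n/m - 1)`, differentiating a sum `∑_{x ∈ A} f x p_x(m)` multiplies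
each weight by `x/m - 1`. The quotient rule applied to `E[X | X ∈ A] = N/S` with
`N = ∑ x p_x`, `S = ∑ p_x` then gives `(M/S - (N/S)²)/μ` where `M = ∑ x² p_x`, i.e. the
conditional variance divided by `μ`. A variance with positive weights vanishes exactly when
all points of `A` coincide with the mean, i.e. when `A` is a singleton.
-/

open scoped BigOperators

/-- Conditional expectation `E[X | X ∈ A]` for `X ~ Poisson(μ)` and a finite set `A ⊆ ℕ`. -/
noncomputable def condExp (A : Finset ℕ) (μ : ℝ) : ℝ :=
  (∑ x ∈ A, (x : ℝ) * poissonPMF μ x) / (∑ x ∈ A, poissonPMF μ x)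

/-- Conditional variance `Var[X | X ∈ A]` for `X ~ Poisson(μ)` and a finite set `A ⊆ ℕ`. -/
noncomputable def condVar (A : Finset ℕ) (μ : ℝ) : ℝ :=
  (∑ x ∈ A, ((x : ℝ) - condExp A μ) ^ 2 * poissonPMF μ x) / (∑ x ∈ A, poissonPMF μ x)

open Finset

section WeightedVariance

variable {ι : Type*} {s : Finset ι} {f w : ι → ℝ}

lemma sum_sub_sq_mul (c : ℝ) :
    ∑ i ∈ s, (f i - c) ^ 2 * w i =
      ∑ i ∈ s, f i ^ 2 * w i - 2 * c * ∑ i ∈ s, f i * w i + c ^ 2 * ∑ i ∈ s, w i := by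
  simp only [mul_sum, ← sum_sub_distrib, ← sum_add_distrib]
  exact sum_congr rfl fun i _ => by ring

lemma sum_sub_sq_mul_nonneg (hw : ∀ i ∈ s, 0 ≤ w i) (c : ℝ) :
    0 ≤ ∑ i ∈ s, (f i - c) ^ 2 * w i :=
  sum_nonneg fun i hi => mul_nonneg (sq_nonneg _) (hw i hi)

lemma sum_sub_sq_mul_eq_zero_iff (hw : ∀ i ∈ s, 0 < w i) (c : ℝ) :
    ∑ i ∈ s, (f i - c) ^ 2 * w i = 0 ↔ ∀ i ∈ s, f i = c := by
  rw [sum_eq_zero_iff_of_nonneg fun i hi => mul_nonneg (sq_nonneg _) (hw i hi).le]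
  refine forall₂_congr fun i hi => ?_
  rw [mul_eq_zero, or_iff_left (hw i hi).ne', sq_eq_zero_iff, sub_eq_zero]

end WeightedVariance

lemma poissonPMF_pos {μ : ℝ} (hμ : 0 < μ) (n : ℕ) : 0 < poissonPMF μ n := by
  unfold poissonPMF; positivity

lemma hasDerivAt_poissonPMF {μ : ℝ} (hμ : μ ≠ 0) (n : ℕ) :
    HasDerivAt (fun m => poissonPMF m n) (poissonPMF μ n * (n / μ - 1)) μ := by
  have h := ((hasDerivAt_neg μ).exp.mul (hasDerivAt_pow n μ)).div_const (n.factorial : ℝ)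
  refine h.congr_deriv ?_
  have hpow : (n : ℝ) * μ ^ (n - 1) = n * μ ^ n / μ := by
    cases n with
    | zero => simp
    | succ k => rw [Nat.add_sub_cancel, pow_succ]; field_simp
  rw [hpow, poissonPMF]
  field_simp
  ring

lemma hasDerivAt_sum_mul_poissonPMF {μ : ℝ} (hμ : μ ≠ 0) (A : Finset ℕ) (f : ℕ → ℝ) :
    HasDerivAt (fun m => ∑ x ∈ A, f x * poissonPMF m x)
      ((∑ x ∈ A, f x * x * poissonPMF μ x) / μ - ∑ x ∈ A, f x * poissonPMF μ x) μ := by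
  refine (HasDerivAt.fun_sum fun x (_ : x ∈ A) =>
    (hasDerivAt_poissonPMF hμ x).const_mul (f x)).congr_deriv ?_
  rw [sum_div, ← sum_sub_distrib]
  exact sum_congr rfl fun x _ => by ring

lemma condVar_eq_sub_sq (A : Finset ℕ) {μ : ℝ} (hS : ∑ x ∈ A, poissonPMF μ x ≠ 0) :
    condVar A μ = (∑ x ∈ A, (x : ℝ) ^ 2 * poissonPMF μ x) / (∑ x ∈ A, poissonPMF μ x)
      - condExp A μ ^ 2 := by
  rw [condVar, sum_sub_sq_mul, condExp]
  field_simp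
  ring

lemma hasDerivAt_condExp (A : Finset ℕ) {μ : ℝ} (hμ : μ ≠ 0)
    (hS : ∑ x ∈ A, poissonPMF μ x ≠ 0) :
    HasDerivAt (fun m => condExp A m) (condVar A μ / μ) μ := by
  have hN := hasDerivAt_sum_mul_poissonPMF hμ A (↑)
  have hS' : HasDerivAt (fun m => ∑ x ∈ A, poissonPMF m x)
      ((∑ x ∈ A, (x : ℝ) * poissonPMF μ x) / μ - ∑ x ∈ A, poissonPMF μ x) μ := by
    simpa using hasDerivAt_sum_mul_poissonPMF hμ A 1
  refine (hN.div hS' hS).congr_deriv ?_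
  rw [condVar_eq_sub_sq A hS, condExp]
  field_simp
  ring

lemma condVar_nonneg (A : Finset ℕ) {μ : ℝ} (hμ : 0 < μ) : 0 ≤ condVar A μ :=
  div_nonneg (sum_sub_sq_mul_nonneg (fun x _ => (poissonPMF_pos hμ x).le) _)
    (sum_nonneg fun x _ => (poissonPMF_pos hμ x).le)

lemma condVar_eq_zero_iff {A : Finset ℕ} (hA : A.Nonempty) {μ : ℝ} (hμ : 0 < μ) :
    condVar A μ = 0 ↔ ∃ a, A = {a} := by
  have hS : 0 < ∑ x ∈ A, poissonPMF μ x := sum_pos (fun x _ => poissonPMF_pos hμ x) hA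
  rw [condVar, div_eq_zero_iff, or_iff_left hS.ne',
    sum_sub_sq_mul_eq_zero_iff fun x _ => poissonPMF_pos hμ x]
  constructor
  · intro hmean
    obtain ⟨a, ha⟩ := hA
    refine ⟨a, eq_singleton_iff_unique_mem.mpr ⟨ha, fun x hx => ?_⟩⟩
    exact_mod_cast (hmean x hx).trans (hmean a ha).symm
  · rintro ⟨a, rfl⟩ x hx
    rw [mem_singleton.mp hx, condExp, sum_singleton, sum_singleton,
      mul_div_cancel_right₀ _ (poissonPMF_pos hμ a).ne']

theorem stmt6_general (μ : ℝ) (hμ : 0 < μ) (A : Finset ℕ) (hA : A.Nonempty) :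
    HasDerivAt (fun m : ℝ => condExp A m) ((1 / μ) * condVar A μ) μ ∧
      0 ≤ (1 / μ) * condVar A μ ∧
      ((1 / μ) * condVar A μ = 0 ↔ ∃ a, A = {a}) := by
  have hS : 0 < ∑ x ∈ A, poissonPMF μ x := sum_pos (fun x _ => poissonPMF_pos hμ x) hA
  rw [one_div_mul_eq_div]
  refine ⟨hasDerivAt_condExp A hμ.ne' hS.ne', div_nonneg (condVar_nonneg A hμ) hμ.le, ?_⟩
  rw [div_eq_zero_iff, or_iff_left hμ.ne', condVar_eq_zero_iff hA hμ]

/-- For `X ~ Poisson(μ)` with `μ > 0` and a nonempty finite set `A ⊆ ℕ` with `P(X ∈ A) > 0`,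
the derivative in `μ` of `E[X | X ∈ A]` equals `(1/μ) ⬝ Var[X | X ∈ A]`, which is
nonnegative, and it is zero if and only if `A` is a singleton. -/
theorem stmt6 (μ : ℝ) (hμ : 0 < μ) (A : Finset ℕ) (hA : A.Nonempty)
    (hpos : 0 < ∑ x ∈ A, poissonPMF μ x) :
    HasDerivAt (fun m : ℝ => condExp A m) ((1 / μ) * condVar A μ) μ ∧
      0 ≤ (1 / μ) * condVar A μ ∧
      ((1 / μ) * condVar A μ = 0 ↔ ∃ a, A = {a}) :=
  stmt6_general μ hμ A hA
end

section
/- For a Poisson random variable Y with mean λT_H > 0 and positive integer q_H, the variance of the truncated variable is strictly smaller than its mean: Var[Y_{q_H}] < E[Y_{q_H}], where Y_{q_H} = min(Y, q_H). -/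
section aux
variable {μ : ℝ}

lemma pmf_pos (hμ : 0 < μ) (n : ℕ) : 0 < poissonPMF μ n := by
  unfold poissonPMF; positivity

lemma pmf_rec (n : ℕ) : poissonPMF μ (n + 1) * (n + 1) = μ * poissonPMF μ n := by
  unfold poissonPMF
  rw [Nat.factorial_succ]
  have h1 : (n.factorial : ℝ) ≠ 0 := Nat.cast_ne_zero.mpr n.factorial_ne_zero
  have h2 : ((n : ℝ) + 1) ≠ 0 := by positivity
  push_cast
  field_simp
  ring

lemma summable_pmf : Summable (poissonPMF μ) := by
  exact ((Real.summable_pow_div_factorial μ).mul_left (Real.exp (-μ))).congr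
    fun n => by simp [poissonPMF, mul_div_assoc]

lemma tsum_pmf : ∑' n, poissonPMF μ n = 1 := by
  have h : ∑' n : ℕ, μ ^ n / n.factorial = Real.exp μ := by
    rw [Real.exp_eq_exp_ℝ, NormedSpace.exp_eq_tsum_div]
  simp only [poissonPMF, mul_div_assoc]
  rw [tsum_mul_left, h, ← Real.exp_add]
  simp

end aux

/-- For `Y ~ Poisson(λ T_H)` with `λ T_H > 0` and a positive integer `q_H`, the variance of
the truncated variable `Y_{q_H} = min(Y, q_H)` is strictly smaller than its mean:
`Var[Y_{q_H}] < E[Y_{q_H}]`. -/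
theorem stmt19 (lam T_H : ℝ) (hlam : 0 < lam) (hT_H : 0 < T_H) (q_H : ℕ) (hq_H : 1 ≤ q_H) :
    (∑' n : ℕ, poissonPMF (lam * T_H) n * ((min n q_H : ℝ)) ^ 2) -
        (∑' n : ℕ, poissonPMF (lam * T_H) n * (min n q_H : ℝ)) ^ 2 <
      ∑' n : ℕ, poissonPMF (lam * T_H) n * (min n q_H : ℝ) := by
  set μ : ℝ := lam * T_H with hμdef
  have hμ : 0 < μ := mul_pos hlam hT_H
  set p : ℕ → ℝ := poissonPMF μ with hpdef
  set q : ℕ := q_H with hqdef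
  have hQ1 : (1 : ℝ) ≤ (q : ℝ) := by exact_mod_cast hq_H
  have hp : ∀ n, 0 < p n := pmf_pos hμ
  have hS : Summable p := summable_pmf
  have h1 : ∑' n, p n = 1 := tsum_pmf
  have hmin0 : ∀ n : ℕ, (0 : ℝ) ≤ min (n : ℝ) (q : ℝ) :=
    fun n => le_min (Nat.cast_nonneg n) (Nat.cast_nonneg q)
  have hmin0' : ∀ n : ℕ, (0 : ℝ) ≤ min (n : ℝ) ((q : ℝ) - 1) :=
    fun n => le_min (Nat.cast_nonneg n) (by linarith)
  -- summability of p n * n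
  have hSn : Summable (fun n => p n * n) := by
    rw [← summable_nat_add_iff 1]
    exact (hS.mul_left μ).congr fun n => by push_cast; linarith [pmf_rec (μ := μ) n]
  have htn : ∑' n, p n * n = μ := by
    rw [Summable.tsum_eq_zero_add hSn]
    calc p 0 * ((0 : ℕ) : ℝ) + ∑' n, p (n + 1) * ((n + 1 : ℕ) : ℝ)
        = ∑' n, μ * p n := by
          rw [Nat.cast_zero, mul_zero, zero_add]
          exact tsum_congr fun n => by push_cast; linarith [pmf_rec (μ := μ) n]
      _ = μ := by rw [tsum_mul_left, h1, mul_one]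
  have hbdd : ∀ (f : ℕ → ℝ) (C : ℝ), (∀ n, 0 ≤ f n) → (∀ n, f n ≤ C) →
      Summable (fun n => p n * f n) := fun f C h0 hC =>
    Summable.of_nonneg_of_le (fun n => mul_nonneg (hp n).le (h0 n))
      (fun n => mul_le_mul_of_nonneg_left (hC n) (hp n).le) (hS.mul_right C)
  have hSm : Summable (fun n => p n * min (n : ℝ) (q : ℝ)) :=
    hbdd _ (q : ℝ) hmin0 (fun n => min_le_right _ _)
  have hSm2 : Summable (fun n => p n * min (n : ℝ) (q : ℝ) ^ 2) :=
    hbdd _ ((q : ℝ) ^ 2) (fun n => by positivity)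
      (fun n => pow_le_pow_left₀ (hmin0 n) (min_le_right _ _) 2)
  have hSm' : Summable (fun n => p n * min (n : ℝ) ((q : ℝ) - 1)) :=
    hbdd _ ((q : ℝ) - 1) hmin0' (fun n => min_le_right _ _)
  have hSs : Summable (fun n => if q ≤ n then p n else 0) :=
    Summable.of_nonneg_of_le (fun n => by split <;> simp [(hp n).le])
      (fun n => by split <;> simp [(hp n).le]) hS
  have hSnm : Summable (fun n => p n * n * min (n : ℝ) (q : ℝ)) := by
    refine Summable.of_nonneg_of_le
      (fun n => mul_nonneg (mul_nonneg (hp n).le (Nat.cast_nonneg n)) (hmin0 n))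
      (fun n => ?_) (hSn.mul_right (q : ℝ))
    exact mul_le_mul_of_nonneg_left (min_le_right _ _)
      (mul_nonneg (hp n).le (Nat.cast_nonneg n))
  set m : ℝ := ∑' n, p n * min (n : ℝ) (q : ℝ) with hmdef
  set m2 : ℝ := ∑' n, p n * min (n : ℝ) (q : ℝ) ^ 2 with hm2def
  set m' : ℝ := ∑' n, p n * min (n : ℝ) ((q : ℝ) - 1) with hm'def
  set s : ℝ := ∑' n, if q ≤ n then p n else 0 with hsdef
  have hcast : ((q - 1 : ℕ) : ℝ) = (q : ℝ) - 1 := by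
    rw [Nat.cast_sub hq_H]; norm_num
  -- (A) shift identity
  have hA : ∑' n, p n * n * min (n : ℝ) (q : ℝ) = μ * (1 + m') := by
    rw [Summable.tsum_eq_zero_add hSnm]
    have hterm : ∀ n : ℕ, p (n + 1) * ((n + 1 : ℕ) : ℝ) * min ((n + 1 : ℕ) : ℝ) (q : ℝ)
        = μ * (p n + p n * min (n : ℝ) ((q : ℝ) - 1)) := by
      intro n
      have hminnat : min (n + 1) q = min n (q - 1) + 1 := by omega
      have hmincast : min ((n + 1 : ℕ) : ℝ) (q : ℝ) = min (n : ℝ) ((q : ℝ) - 1) + 1 := by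
        have := congrArg (fun k : ℕ => (k : ℝ)) hminnat
        push_cast [hcast] at this ⊢
        linarith
      rw [hmincast]
      push_cast
      linear_combination (min (n : ℝ) ((q : ℝ) - 1) + 1) * pmf_rec (μ := μ) n
    calc p 0 * ((0 : ℕ) : ℝ) * min ((0 : ℕ) : ℝ) (q : ℝ)
          + ∑' n, p (n + 1) * ((n + 1 : ℕ) : ℝ) * min ((n + 1 : ℕ) : ℝ) (q : ℝ)
        = ∑' n, μ * (p n + p n * min (n : ℝ) ((q : ℝ) - 1)) := by
          rw [Nat.cast_zero, mul_zero, zero_mul, zero_add]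
          exact tsum_congr hterm
      _ = μ * (1 + m') := by
          rw [tsum_mul_left, Summable.tsum_add hS hSm', h1]
  -- (B) m2 relation
  have hB : μ * (1 + m') = m2 + (q : ℝ) * (μ - m) := by
    rw [← hA, ← htn]
    have hterm : ∀ n : ℕ, p n * n * min (n : ℝ) (q : ℝ)
        = p n * min (n : ℝ) (q : ℝ) ^ 2
          + (q : ℝ) * (p n * n - p n * min (n : ℝ) (q : ℝ)) := by
      intro n
      rcases le_total n q with h | h
      · rw [min_eq_left (by exact_mod_cast h)]; ring
      · rw [min_eq_right (by exact_mod_cast h)]; ring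
    calc (∑' n, p n * n * min (n : ℝ) (q : ℝ))
        = ∑' n, (p n * min (n : ℝ) (q : ℝ) ^ 2
            + (q : ℝ) * (p n * n - p n * min (n : ℝ) (q : ℝ))) := tsum_congr hterm
      _ = m2 + (q : ℝ) * ((∑' n, p n * n) - m) := by
          rw [Summable.tsum_add hSm2 ((hSn.sub hSm).mul_left (q : ℝ)), tsum_mul_left,
            Summable.tsum_sub hSn hSm]
  -- (C) m = m' + s
  have hC : m = m' + s := by
    rw [hmdef, hm'def, hsdef, ← Summable.tsum_add hSm' hSs]
    refine tsum_congr fun n => ?_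
    rcases le_or_gt q n with h | h
    · rw [min_eq_right (by exact_mod_cast h), if_pos h,
        min_eq_right (by { have : q - 1 ≤ n := by omega
                           calc (q:ℝ) - 1 = ((q - 1 : ℕ) : ℝ) := hcast.symm
                             _ ≤ (n : ℝ) := by exact_mod_cast this })]
      ring
    · rw [min_eq_left (by exact_mod_cast h.le), if_neg (by omega),
        min_eq_left (by { have : n ≤ q - 1 := by omega
                          calc (n : ℝ) ≤ ((q - 1 : ℕ) : ℝ) := by exact_mod_cast this
                            _ = (q : ℝ) - 1 := hcast })]
      ring
  -- (D) s > 0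
  have hD : 0 < s := by
    have hle : (if q ≤ q then p q else 0) ≤ s :=
      Summable.le_tsum hSs q (fun j _ => by split <;> simp [(hp j).le])
    rw [if_pos le_rfl] at hle
    exact lt_of_lt_of_le (hp q) hle
  -- (E) m ≤ μ
  have hE : m ≤ μ := by
    rw [hmdef, ← htn]
    exact Summable.tsum_le_tsum (fun n => mul_le_mul_of_nonneg_left (min_le_left _ _) (hp n).le) hSm hSn
  -- (F) m' ≤ q - 1
  have hF : m' ≤ (q : ℝ) - 1 := by
    have h2 : m' ≤ ∑' n, p n * ((q : ℝ) - 1) :=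
      Summable.tsum_le_tsum (fun n => mul_le_mul_of_nonneg_left (min_le_right _ _) (hp n).le)
        hSm' (hS.mul_right _)
    rwa [tsum_mul_right, h1, one_mul] at h2
  -- (G) m > 0
  have hG : 0 < m := by
    have hle : p q * min (q : ℝ) (q : ℝ) ≤ m :=
      Summable.le_tsum hSm q (fun j _ => mul_nonneg (hp j).le (hmin0 j))
    rw [min_self] at hle
    nlinarith [hp q]
  show m2 - m ^ 2 < m
  nlinarith [mul_nonneg (sub_nonneg.2 hE) (sub_nonneg.2 hF), mul_pos hG hD]
end
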